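/- arXiv:2306.15267 — 6 statements merged into one kernel-verified Lean document; each statement's English description precedes it below -/
import Mathlib

section
/- A matroid M = (E, B) satisfies ρ(A) ≤ ρ(E) for all nonempty A ⊆ E (where ρ(A) = |A|/rank(A)) if and only if there exists a measure μ on B such that μ({B ∈ B : e ∈ B}) takes the same value for all e ∈ E. -/
/-!
If a probability measure `μ` on the bases has constant marginal `c`, then averaging `|B ∩ A|`
against `μ` gives `|A| · c ≤ rk A` and `|E| · c = rk E`, which is the density inequality.

Conversely, if the point with all coordinates `rk E / |E|` were outside the convex hull of the
indicator vectors of the bases, a separating functional would give weights `w` with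
`rk E · w(E) > |E| · w(B)` for every base `B`. This fails for a greedy base, one that spans every
upper level set `{e | w e₀ ≤ w e}` of `w` at once: by Abel summation over these level sets,
`rk E · w(E) ≤ |E| · w(B)` reduces to `rk E · |A| ≤ |E| · rk A` for each level set `A`.
-/

open Finset

variable {α : Type*} [DecidableEq α]

def isBaseFamily (E : Finset α) (Bs : Finset (Finset α)) : Prop :=
  Bs.Nonempty ∧ (∀ B ∈ Bs, B ⊆ E) ∧
    ∀ A ∈ Bs, ∀ B ∈ Bs, ∀ a ∈ A \ B, ∃ b ∈ B \ A, insert b (A.erase a) ∈ Bs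

def rk (Bs : Finset (Finset α)) (A : Finset α) : ℕ :=
  Bs.sup fun B => (B ∩ A).card

def loopless (E : Finset α) (Bs : Finset (Finset α)) : Prop :=
  ∀ e ∈ E, ∃ B ∈ Bs, e ∈ B

/-- Uniformly dense: `ρ(A) ≤ ρ(E)` for all nonempty `A ⊆ E`, in cross-multiplied form. -/
def uniformlyDense (E : Finset α) (Bs : Finset (Finset α)) : Prop :=
  ∀ A ⊆ E, A.Nonempty → (A.card : ℝ) * (rk Bs E : ℝ) ≤ (E.card : ℝ) * (rk Bs A : ℝ)

section Bases

variable {E : Finset α} {Bs : Finset (Finset α)}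

theorem card_le_card_of_mem_bases (hM : isBaseFamily E Bs) {A B : Finset α} (hA : A ∈ Bs)
    (hB : B ∈ Bs) : A.card ≤ B.card := by
  induction h : (A \ B).card generalizing A with
  | zero => exact card_le_card (sdiff_eq_empty_iff_subset.1 (card_eq_zero.1 h))
  | succ n ih =>
    obtain ⟨a, ha⟩ := card_pos.1 (by rw [h]; exact n.succ_pos)
    obtain ⟨b, hb, hA'⟩ := hM.2.2 A hA B hB a ha
    rw [mem_sdiff] at ha hb
    have hcard : (insert b (A.erase a)).card = A.card := by
      rw [card_insert_of_notMem fun h => hb.2 (mem_of_mem_erase h), card_erase_add_one ha.1]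
    have hsdiff : insert b (A.erase a) \ B = (A \ B).erase a := by
      ext x
      simp only [mem_sdiff, mem_insert, mem_erase]
      constructor
      · rintro ⟨rfl | hx, hxB⟩
        exacts [absurd hb.1 hxB, ⟨hx.1, hx.2, hxB⟩]
      · rintro ⟨hxa, hxA, hxB⟩
        exact ⟨Or.inr ⟨hxa, hxA⟩, hxB⟩
    rw [← hcard]
    exact ih hA' (by rw [hsdiff, card_erase_of_mem (mem_sdiff.2 ha), h, Nat.add_sub_cancel])

theorem card_eq_of_mem_bases (hM : isBaseFamily E Bs) {A B : Finset α} (hA : A ∈ Bs)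
    (hB : B ∈ Bs) : A.card = B.card :=
  le_antisymm (card_le_card_of_mem_bases hM hA hB) (card_le_card_of_mem_bases hM hB hA)

theorem card_inter_le_rk {B : Finset α} (hB : B ∈ Bs) (A : Finset α) :
    (B ∩ A).card ≤ rk Bs A :=
  le_sup (f := fun B => (B ∩ A).card) hB

theorem exists_mem_bases_card_inter_eq_rk (hne : Bs.Nonempty) (A : Finset α) :
    ∃ B ∈ Bs, (B ∩ A).card = rk Bs A := by
  obtain ⟨B, hB, h⟩ := exists_mem_eq_sup Bs hne fun B => (B ∩ A).card
  exact ⟨B, hB, h.symm⟩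

theorem rk_ground_eq_card (hM : isBaseFamily E Bs) {B : Finset α} (hB : B ∈ Bs) :
    rk Bs E = B.card := by
  refine le_antisymm (Finset.sup_le fun B' hB' => ?_) ?_
  · rw [inter_eq_left.2 (hM.2.1 B' hB')]
    exact (card_eq_of_mem_bases hM hB' hB).le
  · simpa only [inter_eq_left.2 (hM.2.1 B hB)] using card_inter_le_rk hB E

theorem rk_pos (hl : loopless E Bs) {A : Finset α} (hA : A ⊆ E) (hne : A.Nonempty) :
    0 < rk Bs A := by
  obtain ⟨e, he⟩ := hne
  obtain ⟨B, hB, heB⟩ := hl e (hA he)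
  exact (card_pos.2 ⟨e, mem_inter.2 ⟨heB, he⟩⟩).trans_le (card_inter_le_rk hB A)

theorem exists_mem_bases_inter_subset_card_inter_le (hM : isBaseFamily E Bs) (S : Finset α)
    {B B' : Finset α} (hB : B ∈ Bs) (hB' : B' ∈ Bs) :
    ∃ B'' ∈ Bs, B ∩ S ⊆ B'' ∧ (B' ∩ S).card ≤ (B'' ∩ S).card := by
  induction h : (B' \ B).card using Nat.strong_induction_on generalizing B with
  | _ n ih =>
  by_cases hle : (B' ∩ S).card ≤ (B ∩ S).card
  · exact ⟨B, hB, inter_subset_left, hle⟩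
  -- as `|B| = |B'|`, some element of `B \ S` lies outside `B'`
  have hout : ¬ B \ S ⊆ B' := fun hsub => hle <| by
    have hBS := card_inter_add_card_sdiff B S
    have hB'S := card_inter_add_card_sdiff B' S
    have hle' := card_le_card fun x hx => mem_sdiff.2 ⟨hsub hx, (mem_sdiff.1 hx).2⟩
    have := card_eq_of_mem_bases hM hB hB'
    omega
  obtain ⟨a, haBS, haB'⟩ := not_subset.1 hout
  rw [mem_sdiff] at haBS
  obtain ⟨b, hb, hB₁⟩ := hM.2.2 B hB B' hB' a (mem_sdiff.2 ⟨haBS.1, haB'⟩)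
  have hsdiff : B' \ insert b (B.erase a) = (B' \ B).erase b := by
    ext x
    simp only [mem_sdiff, mem_insert, mem_erase]
    constructor
    · rintro ⟨hxB', hx⟩
      refine ⟨fun hxb => hx (Or.inl hxb), hxB', fun hxB => hx (Or.inr ⟨?_, hxB⟩)⟩
      rintro rfl
      exact haB' hxB'
    · rintro ⟨hxb, hxB', hxB⟩
      exact ⟨hxB', by rintro (hx | hx); exacts [hxb hx, hxB hx.2]⟩
  have hlt : (B' \ insert b (B.erase a)).card < n := by
    rw [hsdiff, card_erase_of_mem hb, ← h]
    exact Nat.sub_lt (card_pos.2 ⟨b, hb⟩) one_pos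
  obtain ⟨B'', hB'', hsub, hcard⟩ := ih _ hlt hB₁ rfl
  refine ⟨B'', hB'', fun x hx => hsub ?_, hcard⟩
  rw [mem_inter] at hx ⊢
  exact ⟨mem_insert_of_mem (mem_erase.2 ⟨by rintro rfl; exact haBS.2 hx.2, hx.1⟩), hx.2⟩

theorem exists_mem_bases_inter_subset_card_inter_eq_rk (hM : isBaseFamily E Bs)
    (S : Finset α) {B : Finset α} (hB : B ∈ Bs) :
    ∃ B' ∈ Bs, B ∩ S ⊆ B' ∧ (B' ∩ S).card = rk Bs S := by
  obtain ⟨B₀, hB₀, hB₀S⟩ := exists_mem_bases_card_inter_eq_rk hM.1 S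
  obtain ⟨B', hB', hsub, hle⟩ := exists_mem_bases_inter_subset_card_inter_le hM S hB hB₀
  exact ⟨B', hB', hsub, le_antisymm (card_inter_le_rk hB' S) (hB₀S ▸ hle)⟩

theorem exists_mem_bases_card_inter_eq_rk_of_antitone {ι : Type*} [LinearOrder ι]
    (hM : isBaseFamily E Bs) {C : ι → Finset α} (hC : Antitone C) (T : Finset ι) :
    ∃ B ∈ Bs, ∀ i ∈ T, (B ∩ C i).card = rk Bs (C i) := by
  induction T using Finset.induction_on_min with
  | empty =>
    obtain ⟨B, hB⟩ := hM.1
    exact ⟨B, hB, fun i hi => absurd hi (notMem_empty i)⟩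
  | insert i T hi ih =>
    obtain ⟨B, hB, hBT⟩ := ih
    obtain ⟨B', hB', hsub, hrk⟩ := exists_mem_bases_inter_subset_card_inter_eq_rk hM (C i) hB
    refine ⟨B', hB', forall_mem_insert _ _ _ |>.2 ⟨hrk, fun j hj => ?_⟩⟩
    have hji : C j ⊆ C i := hC (hi j hj).le
    refine le_antisymm (card_inter_le_rk hB' _) (hBT j hj ▸ card_le_card fun x hx => ?_)
    rw [mem_inter] at hx ⊢
    exact ⟨hsub (mem_inter.2 ⟨hx.1, hji hx.2⟩), hx.2⟩

end Bases

section AbelSummation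

variable {ι : Type*} {s : Finset ι} {c w : ι → ℝ}

theorem sum_mul_nonpos_of_nonneg_of_sum_upper_nonpos (hw : ∀ i ∈ s, 0 ≤ w i)
    (hc : ∀ i ∈ s, 0 < w i → ∑ j ∈ s with w i ≤ w j, c j ≤ 0) :
    ∑ i ∈ s, c i * w i ≤ 0 := by
  classical
  induction s using Finset.strongInduction generalizing w with
  | H s ih =>
  rcases s.eq_empty_or_nonempty with rfl | hs
  · simp
  obtain ⟨a, ha, hmin⟩ := s.exists_min_image w hs
  -- peel off the bottom layer `w a`; what remains vanishes at `a`
  have hsplit : ∑ i ∈ s, c i * w i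
      = w a * ∑ i ∈ s, c i + ∑ i ∈ s.erase a, c i * (w i - w a) := by
    rw [sum_erase _ (by simp), mul_sum, ← sum_add_distrib]
    exact sum_congr rfl fun i _ => by ring
  have hbottom : w a * ∑ i ∈ s, c i ≤ 0 := by
    rcases (hw a ha).eq_or_lt with hwa | hwa
    · rw [← hwa, zero_mul]
    · refine mul_nonpos_of_nonneg_of_nonpos hwa.le ?_
      simpa only [filter_true_of_mem hmin] using hc a ha hwa
  have hrest : ∑ i ∈ s.erase a, c i * (w i - w a) ≤ 0 := by
    refine ih _ (erase_ssubset ha) (fun i hi => sub_nonneg.2 (hmin i (mem_of_mem_erase hi)))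
      fun i hi hpos => ?_
    have hfilter : {j ∈ s.erase a | w i - w a ≤ w j - w a} = {j ∈ s | w i ≤ w j} := by
      ext j
      simp only [mem_filter, mem_erase, sub_le_sub_iff_right]
      constructor
      · exact fun h => ⟨h.1.2, h.2⟩
      · rintro ⟨hj, hij⟩
        exact ⟨⟨by rintro rfl; linarith, hj⟩, hij⟩
    rw [hfilter]
    exact hc i (mem_of_mem_erase hi) ((hw a ha).trans_lt (sub_pos.1 hpos))
  linarith

theorem sum_mul_nonpos_of_sum_upper_nonpos (hc : ∀ i ∈ s, ∑ j ∈ s with w i ≤ w j, c j ≤ 0)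
    (hsum : ∑ i ∈ s, c i = 0) : ∑ i ∈ s, c i * w i ≤ 0 := by
  rcases s.eq_empty_or_nonempty with rfl | hs
  · simp
  obtain ⟨a, ha, hmin⟩ := s.exists_min_image w hs
  have hshift := sum_mul_nonpos_of_nonneg_of_sum_upper_nonpos (s := s) (c := c)
    (w := fun i => w i - w a) (fun i hi => sub_nonneg.2 (hmin i hi))
    fun i hi _ => by simpa only [sub_le_sub_iff_right] using hc i hi
  simpa only [mul_sub, sum_sub_distrib, ← sum_mul, hsum, zero_mul, sub_zero] using hshift

end AbelSummation

theorem exists_mem_bases_rk_mul_sum_le {E : Finset α} {Bs : Finset (Finset α)}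
    (hM : isBaseFamily E Bs) (hd : uniformlyDense E Bs) (w : α → ℝ) :
    ∃ B ∈ Bs, (rk Bs E : ℝ) * ∑ e ∈ E, w e ≤ E.card * ∑ e ∈ B, w e := by
  obtain ⟨B, hB, hBw⟩ := exists_mem_bases_card_inter_eq_rk_of_antitone hM
    (C := fun t => {e ∈ E | t ≤ w e})
    (fun s t hst e he => by simp only [mem_filter] at he ⊢; exact ⟨he.1, hst.trans he.2⟩)
    (E.image w)
  have hBE := hM.2.1 B hB
  -- density says exactly that `c` has nonpositive sum on every level set of `w`
  set c : α → ℝ := fun e => rk Bs E - E.card * if e ∈ B then 1 else 0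
  have hc : ∀ A : Finset α, ∑ e ∈ A, c e = A.card * rk Bs E - E.card * (A ∩ B).card := by
    intro A
    simp only [c, sum_sub_distrib, sum_const, nsmul_eq_mul, ← mul_sum, sum_boole,
      filter_mem_eq_inter]
  refine ⟨B, hB, ?_⟩
  have habel := sum_mul_nonpos_of_sum_upper_nonpos (s := E) (c := c) (w := w)
    (fun e he => by
      have hdense := hd {x ∈ E | w e ≤ w x} (filter_subset _ E) ⟨e, mem_filter.2 ⟨he, le_rfl⟩⟩
      rw [hc, inter_comm, hBw (w e) (mem_image_of_mem w he)]
      linarith)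
    (by rw [hc, inter_eq_right.2 hBE, rk_ground_eq_card hM hB]; ring)
  simp only [c, sub_mul, mul_assoc, ite_mul, one_mul, zero_mul, sum_sub_distrib, ← mul_sum,
    sum_ite_mem, inter_eq_right.2 hBE] at habel
  linarith

theorem mem_convexHull_of_forall_exists_le {V : Type*} [AddCommGroup V] [Module ℝ V]
    [TopologicalSpace V] [IsTopologicalAddGroup V] [ContinuousSMul ℝ V] [LocallyConvexSpace ℝ V]
    [T2Space V] {t : Finset V} {x : V} (h : ∀ f : StrongDual ℝ V, ∃ y ∈ t, f x ≤ f y) :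
    x ∈ convexHull ℝ (t : Set V) := by
  by_contra hx
  obtain ⟨f, u, hlt, hu⟩ := geometric_hahn_banach_closed_point (convex_convexHull ℝ _)
    (t.finite_toSet.isClosed_convexHull (𝕜 := ℝ)) hx
  obtain ⟨y, hy, hxy⟩ := h f
  exact (hlt y (subset_convexHull ℝ _ hy)).not_ge (hu.le.trans hxy)

theorem map_eq_sum_mul_map_single {F : Type*} [FunLike F (α → ℝ) ℝ]
    [LinearMapClass F ℝ (α → ℝ) ℝ] (f : F) {s : Finset α} {v : α → ℝ} (hv : ∀ a ∉ s, v a = 0) :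
    f v = ∑ a ∈ s, v a * f (Pi.single a 1) := by
  have hsum : v = ∑ a ∈ s, v a • Pi.single a (1 : ℝ) := by
    ext b
    by_cases hb : b ∈ s <;> simp [Finset.sum_apply, Pi.single_apply, hb, hv]
  conv_lhs => rw [hsum]
  simp only [map_sum, map_smul, smul_eq_mul]

theorem exists_uniform_measure_of_uniformlyDense {E : Finset α} {Bs : Finset (Finset α)}
    (hM : isBaseFamily E Bs) (hd : uniformlyDense E Bs) :
    ∃ μ : Finset α → ℝ, (∀ B ∈ Bs, 0 ≤ μ B) ∧ (∑ B ∈ Bs, μ B = 1) ∧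
      ∃ c : ℝ, ∀ e ∈ E, ∑ B ∈ Bs with e ∈ B, μ B = c := by
  classical
  set P : Finset α → α → ℝ := fun B a => if a ∈ B then 1 else 0
  set x : α → ℝ := fun a => if a ∈ E then (rk Bs E : ℝ) / E.card else 0
  have hx : x ∈ convexHull ℝ ↑(Bs.image P) := by
    refine mem_convexHull_of_forall_exists_le fun f => ?_
    obtain ⟨B, hB, hle⟩ := exists_mem_bases_rk_mul_sum_le hM hd fun a => f (Pi.single a 1)
    refine ⟨P B, mem_image_of_mem P hB, ?_⟩
    rw [map_eq_sum_mul_map_single f (s := E) fun a ha => if_neg ha,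
      map_eq_sum_mul_map_single f (s := B) fun a ha => if_neg ha]
    simp only [ite_mul, one_mul, zero_mul, sum_ite_mem, inter_self, ← mul_sum]
    rcases E.eq_empty_or_nonempty with rfl | hE
    · simp [subset_empty.1 (hM.2.1 B hB)]
    rw [div_mul_eq_mul_div, div_le_iff₀ (by simpa using hE)]
    linarith
  obtain ⟨ν, hν0, hν1, hνx⟩ := Finset.mem_convexHull'.1 hx
  have hP : Set.InjOn P Bs := fun B _ B' _ h => by
    ext a
    have := congrFun h a
    by_cases ha : a ∈ B <;> by_cases ha' : a ∈ B' <;> simp_all [P]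
  rw [sum_image hP] at hν1 hνx
  refine ⟨fun B => ν (P B), fun B hB => hν0 _ (mem_image_of_mem P hB), hν1, rk Bs E / E.card,
    fun e he => ?_⟩
  simpa [Finset.sum_apply, P, x, he, sum_filter] using congrFun hνx e

theorem sum_sum_filter_mem_eq_sum_mul_card_inter (Bs : Finset (Finset α))
    (μ : Finset α → ℝ) (A : Finset α) :
    ∑ e ∈ A, ∑ B ∈ Bs with e ∈ B, μ B = ∑ B ∈ Bs, μ B * (B ∩ A).card := by
  simp_rw [sum_filter]
  rw [sum_comm]
  refine sum_congr rfl fun B _ => ?_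
  rw [sum_ite_mem, sum_const, nsmul_eq_mul, inter_comm, mul_comm]

theorem uniformlyDense_of_uniform_measure {E : Finset α} {Bs : Finset (Finset α)}
    (hM : isBaseFamily E Bs) {μ : Finset α → ℝ} (hμ0 : ∀ B ∈ Bs, 0 ≤ μ B)
    (hμ1 : ∑ B ∈ Bs, μ B = 1) {c : ℝ} (hc : ∀ e ∈ E, ∑ B ∈ Bs with e ∈ B, μ B = c) :
    uniformlyDense E Bs := by
  have hmarginal : ∀ A ⊆ E, ∑ B ∈ Bs, μ B * (B ∩ A).card = A.card * c := fun A hA => by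
    rw [← sum_sum_filter_mem_eq_sum_mul_card_inter, sum_congr rfl fun e he => hc e (hA he),
      sum_const, nsmul_eq_mul]
  have hE : E.card * c = rk Bs E := calc
    _ = ∑ B ∈ Bs, μ B * (B ∩ E).card := (hmarginal E subset_rfl).symm
    _ = ∑ B ∈ Bs, μ B * rk Bs E := sum_congr rfl fun B hB => by
      rw [inter_eq_left.2 (hM.2.1 B hB), rk_ground_eq_card hM hB]
    _ = rk Bs E := by rw [← sum_mul, hμ1, one_mul]
  intro A hA _
  have hA : A.card * c ≤ rk Bs A := calc
    _ = ∑ B ∈ Bs, μ B * (B ∩ A).card := (hmarginal A hA).symm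
    _ ≤ ∑ B ∈ Bs, μ B * rk Bs A := sum_le_sum fun B hB =>
      mul_le_mul_of_nonneg_left (by exact_mod_cast card_inter_le_rk hB A) (hμ0 B hB)
    _ = rk Bs A := by rw [← sum_mul, hμ1, one_mul]
  calc (A.card : ℝ) * rk Bs E = E.card * (A.card * c) := by rw [← hE]; ring
    _ ≤ E.card * rk Bs A := mul_le_mul_of_nonneg_left hA (Nat.cast_nonneg _)

theorem uniformlyDense_iff_forall_div_le {E : Finset α} {Bs : Finset (Finset α)}
    (hl : loopless E Bs) :
    uniformlyDense E Bs ↔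
      ∀ A ⊆ E, A.Nonempty → (A.card : ℝ) / (rk Bs A : ℝ) ≤ (E.card : ℝ) / (rk Bs E : ℝ) := by
  refine forall₂_congr fun A hA => forall_congr' fun hne => ?_
  rw [div_le_div_iff₀ (by exact_mod_cast rk_pos hl hA hne)
    (by exact_mod_cast rk_pos hl subset_rfl (hne.mono hA))]

/-- A loopless matroid satisfies `ρ(A) ≤ ρ(E)` for all nonempty `A ⊆ E` iff there is a
(normalized) measure on the bases whose marginal `μ({B : e ∈ B})` is the same for all `e ∈ E`. -/
theorem uniformlyDense_iff_exists_uniform_measure (E : Finset α) (Bs : Finset (Finset α))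
    (hM : isBaseFamily E Bs) (hl : loopless E Bs) :
    (∀ A ⊆ E, A.Nonempty →
        (A.card : ℝ) / (rk Bs A : ℝ) ≤ (E.card : ℝ) / (rk Bs E : ℝ)) ↔
      ∃ μ : Finset α → ℝ, (∀ B ∈ Bs, 0 ≤ μ B) ∧ (∑ B ∈ Bs, μ B = 1) ∧
        ∃ c : ℝ, ∀ e ∈ E, ∑ B ∈ Bs.filter (fun B => e ∈ B), μ B = c := by
  rw [← uniformlyDense_iff_forall_div_le hl]
  refine ⟨exists_uniform_measure_of_uniformlyDense hM, ?_⟩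
  rintro ⟨μ, hμ0, hμ1, c, hc⟩
  exact uniformlyDense_of_uniform_measure hM hμ0 hμ1 hc
end

section
/- A matroid M is uniformly dense if and only if its dual matroid M* is uniformly dense. -/
open Finset

variable {α : Type*} [DecidableEq α]

/-! For a base `B`, both `|(E \ B) ∩ A| + |B|` and `|A| + |B ∩ (E \ A)|` equal `|A ∪ B|`; as all bases
have size `r(E)` (exchange property), maximising over bases gives the dual rank formula
`r*(A) + r(E) = |A| + r(E \ A)`. Substituting it, `|E| r*(A) - |A| r*(E) = |E| r(E \ A) - |E \ A| r(E)`,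
so the density inequality of `M*` at `A` is that of `M` at `E \ A`, and complementation in `E`
is an involution. -/

lemma exchangeProperty_coe {Bs : Finset (Finset α)}
    (hex : ∀ A ∈ Bs, ∀ B ∈ Bs, ∀ a ∈ A \ B, ∃ b ∈ B \ A, insert b (A.erase a) ∈ Bs) :
    Matroid.ExchangeProperty fun S : Set α => ∃ B ∈ Bs, (B : Set α) = S := by
  rintro _ _ ⟨A, hA, rfl⟩ ⟨B, hB, rfl⟩ a ha
  obtain ⟨b, hb, hbA⟩ := hex A hA B hB a (by simpa using ha)
  exact ⟨b, by simpa using hb, _, hbA, by simp [Finset.coe_erase]⟩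

namespace isBaseFamily

variable {E : Finset α} {Bs : Finset (Finset α)}

theorem card_eq_card (hM : isBaseFamily E Bs) {A B : Finset α} (hA : A ∈ Bs) (hB : B ∈ Bs) :
    A.card = B.card := by
  have := (exchangeProperty_coe hM.2.2).encard_isBase_eq ⟨A, hA, rfl⟩ ⟨B, hB, rfl⟩
  simpa only [Set.encard_coe_eq_coe_finsetCard, Nat.cast_inj] using this

theorem rk_ground_eq_card (hM : isBaseFamily E Bs) {B : Finset α} (hB : B ∈ Bs) :
    rk Bs E = B.card := by
  refine le_antisymm (Finset.sup_le fun B' hB' => ?_) ?_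
  · rw [inter_eq_left.mpr (hM.2.1 B' hB')]
    exact (hM.card_eq_card hB' hB).le
  · simpa only [rk, inter_eq_left.mpr (hM.2.1 B hB)] using
      Finset.le_sup (f := fun B => (B ∩ E).card) hB

end isBaseFamily

lemma card_sdiff_inter_add_card {E A B : Finset α} (hA : A ⊆ E) (hB : B ⊆ E) :
    ((E \ B) ∩ A).card + B.card = A.card + (B ∩ (E \ A)).card := by
  have hAB : (E \ B) ∩ A = A \ B := by grind
  have hBA : B ∩ (E \ A) = B \ A := by grind
  rw [hAB, hBA, card_sdiff_add_card, add_comm, card_sdiff_add_card, union_comm]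

lemma rk_empty (Bs : Finset (Finset α)) : rk Bs ∅ = 0 := by
  simp [rk]

theorem rk_dual_add_rk {E A : Finset α} {Bs : Finset (Finset α)} (hM : isBaseFamily E Bs)
    (hA : A ⊆ E) :
    rk (Bs.image fun B => E \ B) A + rk Bs E = A.card + rk Bs (E \ A) := by
  calc rk (Bs.image fun B => E \ B) A + rk Bs E
      = Bs.sup fun B => ((E \ B) ∩ A).card + rk Bs E := by
        rw [rk, sup_image, Finset.sup_add hM.1]; rfl
    _ = Bs.sup fun B => A.card + (B ∩ (E \ A)).card := by
        refine sup_congr rfl fun B hB => ?_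
        rw [hM.rk_ground_eq_card hB, card_sdiff_inter_add_card hA (hM.2.1 B hB)]
    _ = A.card + rk Bs (E \ A) := by
        rw [rk, Finset.add_sup hM.1]

lemma uniformlyDense_iff_forall_subset {E : Finset α} {Bs : Finset (Finset α)} :
    uniformlyDense E Bs ↔
      ∀ A ⊆ E, (A.card : ℝ) * (rk Bs E : ℝ) ≤ (E.card : ℝ) * (rk Bs A : ℝ) := by
  refine ⟨fun h A hA => ?_, fun h A hA _ => h A hA⟩
  obtain rfl | hne := A.eq_empty_or_nonempty
  · simp [rk_empty]
  · exact h A hA hne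

theorem dual_density_le_iff {E A : Finset α} {Bs : Finset (Finset α)}
    (hM : isBaseFamily E Bs) (hA : A ⊆ E) :
    (A.card : ℝ) * (rk (Bs.image fun B => E \ B) E : ℝ)
        ≤ (E.card : ℝ) * (rk (Bs.image fun B => E \ B) A : ℝ) ↔
      ((E \ A).card : ℝ) * (rk Bs E : ℝ) ≤ (E.card : ℝ) * (rk Bs (E \ A) : ℝ) := by
  have hdA := congrArg (Nat.cast : ℕ → ℝ) (rk_dual_add_rk hM hA)
  have hdE := congrArg (Nat.cast : ℕ → ℝ) (rk_dual_add_rk hM (subset_refl E))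
  have hcard : ((E \ A).card : ℝ) + A.card = E.card := by
    exact_mod_cast card_sdiff_add_card_eq_card hA
  rw [Finset.sdiff_self, rk_empty] at hdE
  push_cast at hdA hdE
  have hgap : (E.card : ℝ) * rk (Bs.image fun B => E \ B) A
        - A.card * rk (Bs.image fun B => E \ B) E
      = E.card * rk Bs (E \ A) - (E \ A).card * rk Bs E := by
    linear_combination (E.card : ℝ) * hdA - (A.card : ℝ) * hdE + (rk Bs E : ℝ) * hcard
  rw [← sub_nonneg, hgap, sub_nonneg]

/-- A matroid is uniformly dense iff its dual matroid is uniformly dense. -/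
theorem uniformlyDense_iff_dual (E : Finset α) (Bs : Finset (Finset α))
    (hM : isBaseFamily E Bs) :
    uniformlyDense E Bs ↔ uniformlyDense E (Bs.image fun B => E \ B) := by
  simp only [uniformlyDense_iff_forall_subset]
  refine ⟨fun h A hA => (dual_density_le_iff hM hA).2 (h _ sdiff_subset), fun h A hA => ?_⟩
  simpa only [Finset.sdiff_sdiff_eq_self hA] using
    (dual_density_le_iff hM (sdiff_subset : E \ A ⊆ E)).1 (h _ sdiff_subset)
end

section
/- A graph G = (V, E) is uniformly dense if and only if for every proper subset A ⊂ E, removing A increases the number of connected components by at most |A|/ρ(G); that is, c(E \ A) − c(E) ≤ |A| · (|V| − c(E))/|E| for all A ⊂ E. -/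
open Finset

variable {V : Type*} [Fintype V] [DecidableEq V]

/-- Number of connected components of the graph `(V, A)` for an edge set `A`. -/
noncomputable def compCount (A : Finset (Sym2 V)) : ℕ :=
  Nat.card (SimpleGraph.fromEdgeSet (↑A : Set (Sym2 V))).ConnectedComponent

/-- The rank of an edge set `A` in the cycle matroid: `|V| - c(A)`. -/
noncomputable def rkE (A : Finset (Sym2 V)) : ℕ := Fintype.card V - compCount A

/-- A graph is uniformly dense if `ρ(A) = |A|/rank(A) ≤ ρ(E)` for all nonempty `A ⊆ E`. -/
def graphUD (G : SimpleGraph V) [Fintype G.edgeSet] : Prop :=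
  ∀ A ⊆ G.edgeFinset, A.Nonempty →
    (A.card : ℝ) / (rkE A : ℝ) ≤ (G.edgeFinset.card : ℝ) / (rkE G.edgeFinset : ℝ)

/-!
Write `B = E \ A`. Since `c(B) ≤ |V|`, `rank B = |V| - c(B)` holds without truncation, and both
`rank B` and `rank E` are positive because `B` and `E` contain an edge. Clearing denominators,
`|B| / rank B ≤ |E| / rank E` becomes `(|E| - |A|)(|V| - c(E)) ≤ |E| (|V| - c(B))`, which rearranges to
`|E| (c(B) - c(E)) ≤ |A| (|V| - c(E))`. Finally `A ↦ E \ A` maps the proper subsets of `E` onto its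
nonempty subsets.
-/

omit [DecidableEq V] in
lemma compCount_le_card (A : Finset (Sym2 V)) : compCount A ≤ Fintype.card V :=
  (Nat.card_le_card_of_surjective _ Quot.mk_surjective).trans_eq Nat.card_eq_fintype_card

omit [DecidableEq V] in
lemma compCount_lt_card {A : Finset (Sym2 V)} {e : Sym2 V} (he : e ∈ A) (hd : ¬e.IsDiag) :
    compCount A < Fintype.card V := by
  induction e using Sym2.ind with
  | _ u v =>
    set H := SimpleGraph.fromEdgeSet (↑A : Set (Sym2 V))
    have hadj : H.Adj u v := (SimpleGraph.fromEdgeSet_adj _).2 ⟨by exact_mod_cast he, hd⟩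
    have hsurj : Function.Surjective H.connectedComponentMk := Quot.mk_surjective
    refine (compCount_le_card A).lt_of_ne fun hcard => hd ?_
    have hbij := (Nat.bijective_iff_surjective_and_card H.connectedComponentMk).2
      ⟨hsurj, by rw [Nat.card_eq_fintype_card, ← hcard, compCount]⟩
    exact hbij.injective (SimpleGraph.ConnectedComponent.connectedComponentMk_eq_of_adj hadj)

omit [DecidableEq V] in
lemma cast_rkE (A : Finset (Sym2 V)) :
    (rkE A : ℝ) = Fintype.card V - compCount A :=
  Nat.cast_sub (compCount_le_card A)

omit [DecidableEq V] in
lemma rkE_pos {A : Finset (Sym2 V)} {e : Sym2 V} (he : e ∈ A) (hd : ¬e.IsDiag) :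
    (0 : ℝ) < rkE A := by
  rw [cast_rkE, sub_pos]
  exact_mod_cast compCount_lt_card he hd

omit [DecidableEq V] in
lemma rkE_pos_of_subset_edgeFinset {G : SimpleGraph V} [Fintype G.edgeSet] {B : Finset (Sym2 V)}
    (hB : B ⊆ G.edgeFinset) (hne : B.Nonempty) : (0 : ℝ) < rkE B :=
  let ⟨_, he⟩ := hne
  rkE_pos he (G.not_isDiag_of_mem_edgeSet (G.mem_edgeFinset.1 (hB he)))

lemma density_sdiff_le_iff {G : SimpleGraph V} [Fintype G.edgeSet] {A : Finset (Sym2 V)}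
    (hA : A ⊂ G.edgeFinset) :
    ((G.edgeFinset \ A).card : ℝ) / rkE (G.edgeFinset \ A) ≤
        (G.edgeFinset.card : ℝ) / rkE G.edgeFinset ↔
      (compCount (G.edgeFinset \ A) : ℝ) - compCount G.edgeFinset ≤
        A.card * ((Fintype.card V : ℝ) - compCount G.edgeFinset) / G.edgeFinset.card := by
  have hB : (G.edgeFinset \ A).Nonempty := sdiff_nonempty.2 hA.not_subset
  have hE : G.edgeFinset.Nonempty := hB.mono sdiff_subset
  have hm : (0 : ℝ) < G.edgeFinset.card := by exact_mod_cast hE.card_pos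
  rw [div_le_div_iff₀ (rkE_pos_of_subset_edgeFinset sdiff_subset hB)
      (rkE_pos_of_subset_edgeFinset subset_rfl hE), le_div_iff₀ hm, cast_rkE, cast_rkE,
    card_sdiff_of_subset hA.subset, Nat.cast_sub (card_le_card hA.subset)]
  constructor <;> intro h <;> linarith

/-- A graph is uniformly dense iff removing any proper edge set `A` increases the number of
connected components by at most `|A| · (|V| - c(E))/|E| = |A|/ρ(G)`. -/
theorem graphUD_iff_componentBound (G : SimpleGraph V) [Fintype G.edgeSet] :
    graphUD G ↔ ∀ A ⊂ G.edgeFinset,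
      (compCount (G.edgeFinset \ A) : ℝ) - (compCount G.edgeFinset : ℝ) ≤
        (A.card : ℝ) * ((Fintype.card V : ℝ) - (compCount G.edgeFinset : ℝ)) /
          (G.edgeFinset.card : ℝ) := by
  refine ⟨fun hUD A hA => ?_, fun hBound B hB hne => ?_⟩
  · exact (density_sdiff_le_iff hA).1 (hUD _ sdiff_subset (sdiff_nonempty.2 hA.not_subset))
  · have hA : G.edgeFinset \ B ⊂ G.edgeFinset := sdiff_ssubset hB hne
    simpa only [Finset.sdiff_sdiff_eq_self hB] using (density_sdiff_le_iff hA).2 (hBound _ hA)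
end

section
/- Let T be an n × n real orthogonal projection matrix (T symmetric, T² = T) of rank k. Then Σ_{S ∈ C(n,k)} det(T_{SS}) · e_S divided by Σ_{S ∈ C(n,k)} det(T_{SS}) equals the diagonal of T; i.e., for each i, Σ_{S ∋ i} det(T_{SS}) = T_{ii} · Σ_S det(T_{SS}), where S ranges over all k-element subsets of [n] and T_{SS} is the principal submatrix indexed by S. -/
/-!
Write the rank-`k` projection as `T = V Vᴴ` with `V` an `n × k` matrix with orthonormal columns.
For `A : n × k` and `B : k × n`, comparing the coefficient of `X ^ k` on both sides of
`det (1 + X A B) = det (1 + X B A)` shows that the principal `k`-minors of `A B` sum to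
`det (B A)`. With `A = V` this makes the principal minors of `T` sum to `det (Vᴴ V) = 1`.
With `A` the matrix `V` with row `i` zeroed, `A Vᴴ` is `T` with row `i` zeroed, whose principal
`k`-minors are those of `T` avoiding `i` (and zero otherwise), while
`det (Vᴴ A) = det (1 - vᴴ v) = 1 - T i i` for `v` the `i`-th row of `V`.
-/

open Finset Matrix Polynomial

namespace Matrix

variable {n m R : Type*} [Fintype n] [DecidableEq n] [Fintype m] [DecidableEq m]

section CommRing

variable [CommRing R]

theorem coeff_card_det_one_add_X_smul (M : Matrix m m R) :
    (det (1 + (X : R[X]) • M.map C)).coeff (Fintype.card m) = M.det := by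
  rw [coeff_det_one_add_X_smul_eq_sum_minors, ← card_univ, powersetCard_self, sum_singleton]
  exact det_submatrix_equiv_self (Equiv.subtypeUnivEquiv mem_univ) M

theorem sum_det_submatrix_mul_eq_det_mul_comm (A : Matrix n m R) (B : Matrix m n R) :
    ∑ S ∈ powersetCard (Fintype.card m) univ,
      ((A * B).submatrix Subtype.val Subtype.val : Matrix S S R).det = (B * A).det := by
  rw [← coeff_det_one_add_X_smul_eq_sum_minors (A * B), ← coeff_card_det_one_add_X_smul (B * A),
    Matrix.map_mul, Matrix.map_mul, ← smul_mul, det_one_add_mul_comm, Matrix.mul_smul]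

theorem sum_det_submatrix_updateRow_zero_eq_sum_filter (M : Matrix n n R) (i : n) (k : ℕ) :
    ∑ S ∈ powersetCard k univ,
      ((M.updateRow i 0).submatrix Subtype.val Subtype.val : Matrix S S R).det =
      ∑ S ∈ (powersetCard k univ).filter (i ∉ ·),
        (M.submatrix Subtype.val Subtype.val : Matrix S S R).det := by
  rw [sum_filter]
  refine sum_congr rfl fun S _ => ?_
  split_ifs with hi
  · exact det_eq_zero_of_row_eq_zero ⟨i, hi⟩ fun b => by simp
  · congr 1
    ext a b
    simp [updateRow_ne (ne_of_mem_of_not_mem a.2 hi)]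

theorem det_conjTranspose_mul_updateRow_zero [StarRing R] {V : Matrix n m R} (hV : Vᴴ * V = 1)
    (i : n) : (Vᴴ * V.updateRow i 0).det = 1 - (V * Vᴴ) i i := by
  have h : Vᴴ * V.updateRow i 0 =
      1 - replicateCol Unit (star (V i)) * replicateRow Unit (V i) := by
    rw [← hV]
    ext a b
    simp [mul_apply, updateRow_apply, sum_ite, filter_ne', sum_erase_eq_sub]
  rw [h, det_one_sub_mul_comm, det_unique, sub_apply, one_apply_eq,
    replicateRow_mul_replicateCol_apply]
  simp [mul_apply, dotProduct]

end CommRing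

section RCLike

variable {𝕜 : Type*} [RCLike 𝕜]

theorem IsHermitian.eigenvalues_eq_zero_or_one_of_isIdempotentElem {T : Matrix n n 𝕜}
    (hT : T.IsHermitian) (hT₂ : IsIdempotentElem T) (j : n) :
    hT.eigenvalues j = 0 ∨ hT.eigenvalues j = 1 := by
  simpa using hT₂.spectrum_subset ℝ (hT.eigenvalues_mem_spectrum_real j)

theorem IsHermitian.exists_mul_conjTranspose_eq_of_isIdempotentElem {T : Matrix n n 𝕜}
    (hT : T.IsHermitian) (hT₂ : IsIdempotentElem T) :
    ∃ V : Matrix n (Fin T.rank) 𝕜, Vᴴ * V = 1 ∧ V * Vᴴ = T := by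
  obtain ⟨U, hU, hTU⟩ : ∃ U : Matrix n n 𝕜,
      Uᴴ * U = 1 ∧ T = U * diagonal (RCLike.ofReal ∘ hT.eigenvalues) * Uᴴ :=
    ⟨_, Unitary.coe_star_mul_self hT.eigenvectorUnitary, hT.spectral_theorem⟩
  have h01 := hT.eigenvalues_eq_zero_or_one_of_isIdempotentElem hT₂
  have hcard := hT.rank_eq_card_non_zero_eigs
  generalize hT.eigenvalues = lam at hTU h01 hcard
  -- `V` keeps the eigenvector columns of `U` with eigenvalue `1`.
  let e : {j // lam j ≠ 0} ≃ Fin T.rank := Fintype.equivFinOfCardEq hcard.symm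
  have hsum (g : n → 𝕜) : ∑ a, g (e.symm a) = ∑ c, (lam c : 𝕜) * g c := by
    rw [e.symm.sum_comp (fun c => g c),
      ← sum_subtype (univ.filter fun c => lam c ≠ 0) (by simp), sum_filter]
    refine sum_congr rfl fun c _ => ?_
    rcases h01 c with h | h <;> simp [h]
  refine ⟨U.submatrix id (fun a => e.symm a), ?_, ?_⟩
  · rw [conjTranspose_submatrix, ← submatrix_mul _ _ _ _ _ Function.bijective_id, hU]
    exact submatrix_one _ (Subtype.val_injective.comp e.symm.injective)
  · refine .trans ?_ hTU.symm
    ext i j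
    rw [mul_apply, mul_apply]
    simp only [mul_diagonal, submatrix_apply, conjTranspose_apply, id, Function.comp_apply]
    rw [hsum (fun c => U i c * star (U j c))]
    exact sum_congr rfl fun c _ => by ring

end RCLike

end Matrix

/-- For an `n × n` real orthogonal projection matrix `T` of rank `k`, the vector of principal
`k`-minors, normalized by their sum, equals the diagonal of `T`:
`Σ_{S ∋ i} det(T_SS) = T_ii · Σ_S det(T_SS)` for each `i`. -/
theorem projection_principalMinors_diag (n k : ℕ) (T : Matrix (Fin n) (Fin n) ℝ)
    (hsymm : T.IsSymm) (hproj : T * T = T) (hrank : T.rank = k) (i : Fin n) :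
    ∑ S ∈ (Finset.powersetCard k (Finset.univ : Finset (Fin n))).filter (fun S => i ∈ S),
        (T.submatrix (fun x : ↥S => (x : Fin n)) (fun x : ↥S => (x : Fin n))).det
      = T i i *
        ∑ S ∈ Finset.powersetCard k (Finset.univ : Finset (Fin n)),
          (T.submatrix (fun x : ↥S => (x : Fin n)) (fun x : ↥S => (x : Fin n))).det := by
  subst hrank
  obtain ⟨V, hVV, hVT⟩ :=
    (isHermitian_iff_isSymm.mpr hsymm).exists_mul_conjTranspose_eq_of_isIdempotentElem hproj
  have htotal := sum_det_submatrix_mul_eq_det_mul_comm V Vᴴ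
  rw [hVT, hVV, det_one, Fintype.card_fin] at htotal
  have havoiding := sum_det_submatrix_mul_eq_det_mul_comm (V.updateRow i 0) Vᴴ
  rw [updateRow_mul, zero_vecMul, hVT, Fintype.card_fin,
    sum_det_submatrix_updateRow_zero_eq_sum_filter, det_conjTranspose_mul_updateRow_zero hVV,
    hVT] at havoiding
  rw [htotal, mul_one]
  rw [← sum_filter_add_sum_filter_not _ (fun S => i ∈ S)] at htotal
  linarith
end

section
/- Let T be an n × n real orthogonal projection matrix of rank k whose diagonal entries are all equal to k/n. Then for every nonempty subset A ⊆ [n], the principal submatrix T_{AA} satisfies rank(T_{AA}) ≥ |A| · k/n. -/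
/-!
With `T`, also `1 - T` is a symmetric idempotent, hence positive semidefinite, and so is its
principal submatrix `1 - T_AA`: all eigenvalues of `T_AA` are at most `1`. Hence its trace, the sum of its
nonzero eigenvalues, is at most their number `rank T_AA`, while the constant diagonal makes the
trace equal to `|A|·k/n`.
-/

open Finset Matrix

open scoped ComplexOrder

namespace Matrix

variable {n : Type*} [Fintype n]

theorem IsHermitian.posSemidef_of_isIdempotentElem {R : Type*} [CommRing R] [PartialOrder R]
    [StarRing R] [StarOrderedRing R] {P : Matrix n n R} (hP : P.IsHermitian)
    (hidem : IsIdempotentElem P) : P.PosSemidef := by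
  simpa [hP.eq, hidem.eq] using posSemidef_conjTranspose_mul_self P

variable [DecidableEq n] {𝕜 : Type*} [RCLike 𝕜]

open scoped MatrixOrder in
theorem IsHermitian.eigenvalues_le_one {M : Matrix n n 𝕜} (hM : M.IsHermitian)
    (h : (1 - M).PosSemidef) (i : n) : hM.eigenvalues i ≤ 1 := by
  have hmem : 1 - hM.eigenvalues i ∈ spectrum ℝ (1 - M) := by
    rw [← map_one (algebraMap ℝ (Matrix n n 𝕜)), ← spectrum.singleton_sub_eq]
    exact Set.sub_mem_sub rfl (hM.eigenvalues_mem_spectrum_real i)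
  linarith [spectrum_nonneg_of_nonneg (nonneg_iff_posSemidef.mpr h) hmem]

theorem re_trace_le_rank_of_posSemidef_one_sub {M : Matrix n n 𝕜} (h : (1 - M).PosSemidef) :
    RCLike.re M.trace ≤ M.rank := by
  have hM : M.IsHermitian := by
    simpa using (isHermitian_one (α := 𝕜)).sub h.isHermitian
  calc RCLike.re M.trace
      = ∑ i with hM.eigenvalues i ≠ 0, hM.eigenvalues i := by
        simp [hM.trace_eq_sum_eigenvalues, sum_filter_ne_zero]
    _ ≤ ∑ i with hM.eigenvalues i ≠ 0, 1 := sum_le_sum fun i _ ↦ hM.eigenvalues_le_one h i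
    _ = M.rank := by simp [hM.rank_eq_card_non_zero_eigs, Fintype.card_subtype]

end Matrix

theorem projection_constDiag_principal_rank_general (n k : ℕ) (T : Matrix (Fin n) (Fin n) ℝ)
    (hsymm : T.IsSymm) (hproj : T * T = T)
    (hdiag : ∀ i : Fin n, T i i = (k : ℝ) / (n : ℝ)) :
    ∀ A : Finset (Fin n), A.Nonempty →
      (A.card : ℝ) * (k : ℝ) / (n : ℝ) ≤
        ((T.submatrix (fun x : ↥A => (x : Fin n)) (fun x : ↥A => (x : Fin n))).rank : ℝ) := by
  intro A _
  set e : A → Fin n := Subtype.val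
  have hcompl : (1 - T).PosSemidef :=
    (isHermitian_one.sub (isHermitian_iff_isSymm.mpr hsymm)).posSemidef_of_isIdempotentElem
      (IsIdempotentElem.one_sub hproj)
  have hsub : (1 - T).submatrix e e = 1 - T.submatrix e e := by
    rw [submatrix_sub, Pi.sub_apply, Pi.sub_apply, submatrix_one _ Subtype.val_injective]
  have htrace : (T.submatrix e e).trace = A.card * k / n := by
    simp [trace, hdiag, mul_div_assoc]
  have hle := re_trace_le_rank_of_posSemidef_one_sub (hsub ▸ hcompl.submatrix e)
  rwa [RCLike.re_to_real, htrace] at hle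

/-- For an `n × n` real orthogonal projection matrix `T` of rank `k` with constant diagonal
`k/n`, every nonempty principal submatrix `T_AA` satisfies `rank(T_AA) ≥ |A|·k/n`. -/
theorem projection_constDiag_principal_rank (n k : ℕ) (T : Matrix (Fin n) (Fin n) ℝ)
    (hsymm : T.IsSymm) (hproj : T * T = T) (hrank : T.rank = k)
    (hdiag : ∀ i : Fin n, T i i = (k : ℝ) / (n : ℝ)) :
    ∀ A : Finset (Fin n), A.Nonempty →
      (A.card : ℝ) * (k : ℝ) / (n : ℝ) ≤
        ((T.submatrix (fun x : ↥A => (x : Fin n)) (fun x : ↥A => (x : Fin n))).rank : ℝ) :=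
  projection_constDiag_principal_rank_general n k T hsymm hproj hdiag
end

section
/- Let X be a real full-rank k × n matrix (k ≤ n) such that for every column index e ∈ [n], the sum Σ_{B} det(X_B)², taken over k-subsets B ⊆ [n] containing e, is the same. Then the matroid M(X) represented by X (bases are the k-subsets B with det(X_B) ≠ 0) is uniformly dense, i.e., |A|/rank(X_A) ≤ n/k for every nonempty A ⊆ [n]. -/
/-!
Put the weight `μ B = det(X_B)² = det(X_B X_Bᵀ) ≥ 0` on the `k`-subsets `B`; it is nonzero exactly
on the bases, and not identically zero since `X` has rank `k`. By hypothesis every column lies in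
bases of the same total weight `c`. Counting incidences `e ∈ B` with weight `μ B` gives
`n c = k Σ μ` over all columns, and `|A| c ≤ rank(X_A) Σ μ` over the columns of `A`, because a
basis meets `A` in an independent set. Hence `|A| k ≤ n rank(X_A)`.
-/

open Finset Matrix

namespace Matrix

variable {m ι K : Type*} [Fintype m] [DecidableEq m] [Fintype ι]

theorem det_mul_transpose_nonneg (M : Matrix m ι ℝ) : 0 ≤ (M * Mᵀ).det := by
  simpa [conjTranspose_eq_transpose_of_trivial] using
    (posSemidef_self_mul_conjTranspose M).det_nonneg

theorem det_mul_transpose_eq_det_submatrix_sq [CommRing K] (M : Matrix m ι K) (e : m ≃ ι) :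
    (M * Mᵀ).det = (M.submatrix id e).det ^ 2 := by
  rw [← submatrix_mul_transpose_submatrix e M, det_mul, ← transpose_submatrix, det_transpose, sq]

theorem det_mul_transpose_ne_zero_iff [Field K] (M : Matrix m ι K)
    (h : Fintype.card m = Fintype.card ι) :
    (M * Mᵀ).det ≠ 0 ↔ LinearIndependent K M.col := by
  let e := Fintype.equivOfCardEq h
  rw [det_mul_transpose_eq_det_submatrix_sq M e, pow_ne_zero_iff two_ne_zero,
    ← isUnit_iff_ne_zero, ← isUnit_iff_isUnit_det, ← linearIndependent_cols_iff_isUnit,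
    ← linearIndependent_equiv e]
  rfl

end Matrix

theorem exists_finset_linearIndepOn_card_eq_finrank_span {ι K V : Type*} [Fintype ι]
    [DivisionRing K] [AddCommGroup V] [Module K V] (v : ι → V) :
    ∃ B : Finset ι, LinearIndepOn K v ↑B ∧
      #B = Module.finrank K (Submodule.span K (Set.range v)) := by
  classical
  obtain ⟨b, -, -, hspan, hb⟩ :=
    exists_linearIndepOn_extension (linearIndepOn_empty K v) (Set.empty_subset Set.univ)
  refine ⟨b.toFinset, by simpa using hb, ?_⟩
  have : Submodule.span K (v '' b) = Submodule.span K (Set.range v) := by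
    refine le_antisymm (Submodule.span_mono (Set.image_subset_range v b)) ?_
    rw [Submodule.span_le, ← Set.image_univ]
    exact hspan
  rw [← this, Set.image_eq_range, finrank_span_eq_card hb, Set.toFinset_card]

theorem card_inter_le_rank_submatrix {m n K : Type*} [Fintype m] [Fintype n] [DecidableEq n]
    [Field K]
    (X : Matrix m n K) (A : Finset n) {B : Finset n} (hB : LinearIndepOn K X.col ↑B) :
    #(B ∩ A) ≤ (X.submatrix id ((↑) : A → n)).rank := by
  rw [rank_eq_finrank_span_cols]
  have hBA : LinearIndepOn K X.col ↑(B ∩ A) := hB.mono (by simp)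
  calc #(B ∩ A) = Module.finrank K (Submodule.span K (X.col '' ↑(B ∩ A))) := by
        rw [Set.image_eq_range, finrank_span_eq_card hBA]
        simp only [coe_sort_coe, Fintype.card_coe]
    _ ≤ _ := by
        refine Submodule.finrank_mono (Submodule.span_mono ?_)
        rintro _ ⟨x, hx, rfl⟩
        rw [Set.mem_range]
        exact ⟨⟨x, (mem_inter.mp hx).2⟩, rfl⟩

section UniformMarginals

variable {α : Type*} [DecidableEq α] (P : Finset (Finset α)) (μ : Finset α → ℝ)

theorem sum_sum_filter_mem_eq_sum_card_inter_mul (T : Finset α) :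
    ∑ e ∈ T, ∑ B ∈ P with e ∈ B, μ B = ∑ B ∈ P, #(B ∩ T) * μ B := by
  simp_rw [sum_filter]
  rw [sum_comm]
  refine sum_congr rfl fun B _ => ?_
  rw [sum_ite_mem, sum_const, nsmul_eq_mul, inter_comm]

variable [Fintype α] {P μ}

theorem card_mul_le_card_mul_of_uniform_marginals {k r : ℕ} (hcard : ∀ B ∈ P, #B = k)
    (hμ : ∀ B ∈ P, 0 ≤ μ B) (hpos : 0 < ∑ B ∈ P, μ B)
    (huni : ∀ e f, ∑ B ∈ P with e ∈ B, μ B = ∑ B ∈ P with f ∈ B, μ B)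
    {A : Finset α} (hA : ∀ B ∈ P, μ B ≠ 0 → #(B ∩ A) ≤ r) :
    #A * k ≤ Fintype.card α * r := by
  obtain rfl | ⟨e₀, -⟩ := A.eq_empty_or_nonempty
  · simp
  set c := ∑ B ∈ P with e₀ ∈ B, μ B
  set S := ∑ B ∈ P, μ B
  have hmarg (T : Finset α) : #T * c = ∑ B ∈ P, #(B ∩ T) * μ B := by
    rw [← sum_sum_filter_mem_eq_sum_card_inter_mul, sum_congr rfl fun e _ => huni e e₀,
      sum_const, nsmul_eq_mul]
  have htotal : (Fintype.card α : ℝ) * c = k * S := by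
    rw [← card_univ, hmarg, mul_sum]
    exact sum_congr rfl fun B hB => by rw [inter_univ, hcard B hB]
  have hpart : (#A : ℝ) * c ≤ r * S := by
    rw [hmarg, mul_sum]
    refine sum_le_sum fun B hB => ?_
    obtain h0 | h0 := eq_or_ne (μ B) 0
    · simp [h0]
    · exact mul_le_mul_of_nonneg_right (by exact_mod_cast hA B hB h0) (hμ B hB)
  have hscaled : (#A * k : ℝ) * S ≤ (Fintype.card α * r) * S := by
    calc (#A * k : ℝ) * S = #A * (Fintype.card α * c) := by rw [htotal]; ring
      _ = Fintype.card α * (#A * c) := by ring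
      _ ≤ Fintype.card α * (r * S) := by gcongr
      _ = (Fintype.card α * r) * S := by ring
  exact_mod_cast le_of_mul_le_mul_right hscaled hpos

end UniformMarginals

theorem Nat.cast_div_le_cast_div_of_mul_le_mul {a b c d : ℕ} (h : a * d ≤ b * c) (hcd : c ≤ d) :
    (a : ℝ) / c ≤ b / d := by
  obtain rfl | hc := c.eq_zero_or_pos
  · simp only [Nat.cast_zero, div_zero]
    positivity
  rw [div_le_div_iff₀ (by exact_mod_cast hc) (by exact_mod_cast hc.trans_le hcd)]
  exact_mod_cast h

theorem uniformlyDense_of_uniform_determinantal_measure_general (k n : ℕ)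
    (X : Matrix (Fin k) (Fin n) ℝ) (hX : X.rank = k)
    (huni : ∀ e f : Fin n,
      (∑ B ∈ (Finset.powersetCard k (Finset.univ : Finset (Fin n))).filter (fun B => e ∈ B),
        ((X.submatrix id (fun x : ↥B => (x : Fin n))) *
          (X.submatrix id (fun x : ↥B => (x : Fin n)))ᵀ).det)
      = ∑ B ∈ (Finset.powersetCard k (Finset.univ : Finset (Fin n))).filter (fun B => f ∈ B),
        ((X.submatrix id (fun x : ↥B => (x : Fin n))) *
          (X.submatrix id (fun x : ↥B => (x : Fin n)))ᵀ).det) :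
    ∀ A : Finset (Fin n), A.Nonempty →
      (A.card : ℝ) / ((X.submatrix id (fun x : ↥A => (x : Fin n))).rank : ℝ) ≤
        (n : ℝ) / (k : ℝ) := by
  intro A _
  set μ : Finset (Fin n) → ℝ := fun B =>
    ((X.submatrix id (fun x : ↥B => (x : Fin n))) *
      (X.submatrix id (fun x : ↥B => (x : Fin n)))ᵀ).det
  have hμ (B : Finset (Fin n)) : 0 ≤ μ B := det_mul_transpose_nonneg _
  have hbasis {B : Finset (Fin n)} (hB : B ∈ powersetCard k univ) :
      μ B ≠ 0 ↔ LinearIndepOn ℝ X.col ↑B :=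
    det_mul_transpose_ne_zero_iff _ (by simpa using (mem_powersetCard_univ.mp hB).symm)
  obtain ⟨B₀, hB₀, hB₀card⟩ := exists_finset_linearIndepOn_card_eq_finrank_span (K := ℝ) X.col
  rw [← rank_eq_finrank_span_cols, hX] at hB₀card
  have hB₀mem : B₀ ∈ powersetCard k univ := mem_powersetCard_univ.mpr hB₀card
  have hpos : 0 < ∑ B ∈ powersetCard k univ, μ B :=
    ((hμ B₀).lt_of_ne ((hbasis hB₀mem).mpr hB₀).symm).trans_le
      (single_le_sum (fun B _ => hμ B) hB₀mem)
  have hcount := card_mul_le_card_mul_of_uniform_marginals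
    (fun B hB => mem_powersetCard_univ.mp hB) (fun B _ => hμ B) hpos huni
    (fun B hB h => card_inter_le_rank_submatrix X A ((hbasis hB).mp h))
  rw [Fintype.card_fin] at hcount
  exact Nat.cast_div_le_cast_div_of_mul_le_mul hcount
    ((rank_le_card_height _).trans_eq (Fintype.card_fin k))

/-- Let `X` be a full-rank `k × n` real matrix such that the sum of `det(X_B)²` over the
`k`-subsets `B` containing `e` (computed here as the Gram determinant
`det(X_B · X_Bᵀ) = det(X_B)²`) is the same for every column `e`. Then the matroid represented
by `X` is uniformly dense: `|A|/rank(X_A) ≤ n/k` for every nonempty `A ⊆ [n]`. -/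
theorem uniformlyDense_of_uniform_determinantal_measure (k n : ℕ) (hk : k ≤ n)
    (X : Matrix (Fin k) (Fin n) ℝ) (hX : X.rank = k)
    (huni : ∀ e f : Fin n,
      (∑ B ∈ (Finset.powersetCard k (Finset.univ : Finset (Fin n))).filter (fun B => e ∈ B),
        ((X.submatrix id (fun x : ↥B => (x : Fin n))) *
          (X.submatrix id (fun x : ↥B => (x : Fin n)))ᵀ).det)
      = ∑ B ∈ (Finset.powersetCard k (Finset.univ : Finset (Fin n))).filter (fun B => f ∈ B),
        ((X.submatrix id (fun x : ↥B => (x : Fin n))) *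
          (X.submatrix id (fun x : ↥B => (x : Fin n)))ᵀ).det) :
    ∀ A : Finset (Fin n), A.Nonempty →
      (A.card : ℝ) / ((X.submatrix id (fun x : ↥A => (x : Fin n))).rank : ℝ) ≤
        (n : ℝ) / (k : ℝ) :=
  uniformlyDense_of_uniform_determinantal_measure_general k n X hX huni
end
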